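/- Let A ⊆ [1,N] be a Sidon set satisfying |A_p| ≤ p/2 + ε(p) for all primes p, where ε(p) ≥ 0 is uniformly bounded. Then |A| ≪ √N / log N. -/

import Mathlib

/-- r_{A-A}(n): number of pairs (a,b) ∈ A×A with a-b = n. -/
def rMinus (A : Finset ℤ) (n : ℤ) : ℕ :=
  ((A ×ˢ A).filter (fun p => p.1 - p.2 = n)).card

/-- A_p: residue classes covered by A modulo p. -/
def resSet (A : Finset ℤ) (p : ℕ) : Finset ℤ :=
  A.image (fun a => a % (p : ℤ))

/-!
Let `m = p₁ ⋯ p_k` be a product of `k` distinct primes `pᵢ > 4Ck`. By the Chinese remainder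
theorem and the hypothesis, `|A_m| ≤ ∏ (pᵢ/2 + C) ≤ (m / 2^k) (1 + 1/(2k))^k ≤ 2m / 2^k`.
Cauchy–Schwarz over the residue classes mod `m` gives
`|A|² ≤ |A_m| · #{(a, b) ∈ A² : a ≡ b [m]}`, and since `A` is Sidon, the off-diagonal pairs
have distinct differences, which are nonzero multiples of `m` in `(-N, N)`; so there are at
most `|A| + 2N/m` such pairs. Hence
`|A|² ≤ (2m / 2^k) (|A| + 2N/m)`, and for `m ≤ √N` this gives `|A| ≤ 4 √N / 2^(k/2)`.
Bertrand's postulate provides the primes with `m ≤ (2^k · O(k))^k`, so `k ≈ 2 log log N`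
makes `2^k ≥ (log N)²` while keeping `m² ≤ N`.
-/

open Finset

def IsSidon (A : Finset ℤ) : Prop :=
  ∀ n : ℤ, n ≠ 0 → rMinus A n ≤ 1

theorem IsSidon.eq_of_sub_eq {A : Finset ℤ} (hS : IsSidon A) {a b c d : ℤ}
    (ha : a ∈ A) (hb : b ∈ A) (hc : c ∈ A) (hd : d ∈ A) (hab : a ≠ b)
    (h : a - b = c - d) :
    a = c ∧ b = d := by
  have := card_le_one.1 (hS (a - b) (sub_ne_zero.2 hab)) (a, b) (by simp [ha, hb])
    (c, d) (by simp [hc, hd, h])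
  simpa using this

def congrPairs (A : Finset ℤ) (m : ℕ) : Finset (ℤ × ℤ) :=
  (A ×ˢ A).filter fun p => p.1 ≡ p.2 [ZMOD m]

theorem sq_card_le_card_resSet_mul_card_congrPairs (A : Finset ℤ) (m : ℕ) :
    (#A : ℝ) ^ 2 ≤ #(resSet A m) * #(congrPairs A m) := by
  set fiber : ℤ → Finset ℤ := fun r => A.filter (· % (m : ℤ) = r)
  have hA : #A = ∑ r ∈ resSet A m, #(fiber r) :=
    card_eq_sum_card_fiberwise fun a ha => mem_image_of_mem _ ha
  have hpairs : #(congrPairs A m) = ∑ r ∈ resSet A m, #(fiber r) ^ 2 := by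
    rw [card_eq_sum_card_fiberwise (f := fun p => p.1 % (m : ℤ)) (t := resSet A m)]
    · refine sum_congr rfl fun r _ => ?_
      rw [sq, ← card_product]
      congr 1
      ext ⟨a, b⟩
      simp only [congrPairs, fiber, Int.ModEq, mem_filter, mem_product]
      grind
    · intro p hp
      exact mem_image_of_mem _ (mem_product.1 (mem_filter.1 hp).1).1
  calc (#A : ℝ) ^ 2 = (∑ r ∈ resSet A m, (#(fiber r) : ℝ)) ^ 2 := by rw [hA]; push_cast; rfl
    _ ≤ #(resSet A m) * ∑ r ∈ resSet A m, (#(fiber r) : ℝ) ^ 2 := sq_sum_le_card_mul_sum_sq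
    _ = #(resSet A m) * #(congrPairs A m) := by rw [hpairs]; push_cast; rfl

theorem IsSidon.card_congrPairs_le {A : Finset ℤ} {N m : ℕ} (hS : IsSidon A)
    (hA : A ⊆ Icc 1 (N : ℤ)) (hm : 0 < m) :
    #(congrPairs A m) ≤ #A + 2 * (N / m) := by
  rw [← card_filter_add_card_filter_not (p := fun p : ℤ × ℤ => p.1 = p.2)]
  gcongr
  · calc _ ≤ #A.diag := card_le_card fun p hp => by
          simp only [congrPairs, mem_filter, mem_product] at hp
          exact mem_diag.2 ⟨hp.1.1.1, hp.2⟩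
      _ = #A := diag_card A
  · -- off the diagonal, `(a, b) ↦ (a - b) / m` is injective by the Sidon property
    obtain ⟨q, hq⟩ : ∃ q, q = N / m := ⟨_, rfl⟩
    have hcard : #((Icc (-(q : ℤ)) q).erase 0) = 2 * q := by
      rw [card_erase_of_mem (by simp), Int.card_Icc]
      omega
    rw [← hq, ← hcard]
    refine card_le_card_of_injOn (fun p => (p.1 - p.2) / m) ?_ ?_
    · rintro ⟨a, b⟩ hp
      simp only [congrPairs, coe_filter, mem_filter, mem_product, Set.mem_ofPred_eq] at hp
      obtain ⟨⟨⟨ha, hb⟩, hab⟩, hne⟩ := hp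
      obtain ⟨j, hj⟩ := hab.symm.dvd
      have hm' : (0 : ℤ) < m := by exact_mod_cast hm
      have ha' := mem_Icc.1 (hA ha)
      have hb' := mem_Icc.1 (hA hb)
      have hdiv : ∀ i : ℤ, i * m ≤ N → i ≤ q := fun i hi => by
        rw [hq, Int.natCast_div]; exact (Int.le_ediv_iff_mul_le hm').2 hi
      simp only [coe_erase, coe_Icc, Set.mem_sdiff, Set.mem_Icc, Set.mem_singleton_iff, hj,
        Int.mul_ediv_cancel_left _ hm'.ne']
      refine ⟨⟨?_, hdiv j (by linarith)⟩, ?_⟩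
      · linarith [hdiv (-j) (by linarith)]
      · rintro rfl; exact hne (by linarith)
    · rintro ⟨a, b⟩ hp ⟨c, d⟩ hq h
      simp only [congrPairs, coe_filter, mem_filter, mem_product, Set.mem_ofPred_eq] at hp hq
      have := hS.eq_of_sub_eq hp.1.1.1 hp.1.1.2 hq.1.1.1 hq.1.1.2 hp.2
        ((Int.ediv_left_inj hp.1.2.symm.dvd hq.1.2.symm.dvd).1 h)
      simp [this]

theorem le_two_mul_of_sq_le_mul_add_sq {R : Type*} [Field R] [LinearOrder R]
    [IsStrictOrderedRing R] {x a : R} (ha : 0 ≤ a) (h : x ^ 2 ≤ a * x + a ^ 2) :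
    x ≤ 2 * a := by
  nlinarith

theorem IsSidon.card_le_of_card_resSet_le {A : Finset ℤ} {N m : ℕ} {T : ℝ} (hS : IsSidon A)
    (hA : A ⊆ Icc 1 (N : ℤ)) (hm : 0 < m) (hmN : m ^ 2 ≤ N) (hT : 1 ≤ T)
    (hres : (#(resSet A m) : ℝ) ≤ 2 * m / T) :
    (#A : ℝ) ≤ 4 * √N / √T := by
  set a := 2 * √N / √T
  have hmN' : (m : ℝ) ≤ √N :=
    (Real.le_sqrt (by positivity) (by positivity)).2 (by exact_mod_cast hmN)
  have hTT : √T ≤ T := by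
    rw [Real.sqrt_le_left (by linarith)]; nlinarith
  have hpairs : (#(congrPairs A m) : ℝ) ≤ #A + 2 * (N / m) := by
    have := Nat.cast_div_le (α := ℝ) (m := N) (n := m)
    have h := hS.card_congrPairs_le hA hm
    calc (#(congrPairs A m) : ℝ) ≤ ((#A + 2 * (N / m) : ℕ) : ℝ) := by exact_mod_cast h
      _ ≤ _ := by push_cast; linarith
  have hsq : (#A : ℝ) ^ 2 ≤ a * #A + a ^ 2 :=
    calc (#A : ℝ) ^ 2 ≤ #(resSet A m) * #(congrPairs A m) :=
          sq_card_le_card_resSet_mul_card_congrPairs A m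
      _ ≤ 2 * m / T * (#A + 2 * (N / m)) := by gcongr
      _ = 2 * m / T * #A + 4 * N / T := by field_simp; ring
      _ ≤ a * #A + a ^ 2 := by
          gcongr ?_ * _ + ?_
          · exact div_le_div₀ (by positivity) (by linarith) (by positivity) hTT
          · rw [div_pow, mul_pow, Real.sq_sqrt (by positivity), Real.sq_sqrt (by linarith)]
            norm_num
  calc (#A : ℝ) ≤ 2 * a := le_two_mul_of_sq_le_mul_add_sq (by positivity) hsq
    _ = 4 * √N / √T := by ring

theorem card_resSet_mul_le (A : Finset ℤ) {m n : ℕ} (hmn : m.Coprime n) :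
    #(resSet A (m * n)) ≤ #(resSet A m) * #(resSet A n) := by
  have hm : ∀ a : ℤ, a % ((m * n : ℕ) : ℤ) % m = a % m := fun a =>
    Int.emod_emod_of_dvd a (by push_cast; exact dvd_mul_right _ _)
  have hn : ∀ a : ℤ, a % ((m * n : ℕ) : ℤ) % n = a % n := fun a =>
    Int.emod_emod_of_dvd a (by push_cast; exact dvd_mul_left _ _)
  rw [← card_product]
  refine card_le_card_of_injOn (fun r => (r % m, r % n)) ?_ ?_
  · intro r hr
    obtain ⟨a, ha, rfl⟩ := mem_image.1 hr
    simp only [coe_product, Set.mem_prod, mem_coe, hm, hn]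
    exact ⟨mem_image_of_mem _ ha, mem_image_of_mem _ ha⟩
  · intro r hr r' hr' h
    obtain ⟨a, -, rfl⟩ := mem_image.1 hr
    obtain ⟨b, -, rfl⟩ := mem_image.1 hr'
    simp only [Prod.mk.injEq, hm, hn] at h
    push_cast
    exact (Int.modEq_and_modEq_iff_modEq_mul (by simpa using hmn)).1 h

theorem card_resSet_prod_le (A : Finset ℤ) {s : Finset ℕ}
    (hs : (s : Set ℕ).Pairwise Nat.Coprime) :
    #(resSet A (∏ p ∈ s, p)) ≤ ∏ p ∈ s, #(resSet A p) := by
  induction s using Finset.induction_on with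
  | empty =>
    refine card_le_one.2 fun r hr r' hr' => ?_
    obtain ⟨a, -, rfl⟩ := mem_image.1 hr
    obtain ⟨b, -, rfl⟩ := mem_image.1 hr'
    simp
  | insert p s hp ih =>
    rw [prod_insert hp, prod_insert hp]
    have hcop : p.Coprime (∏ q ∈ s, q) := Nat.Coprime.prod_right fun q hq =>
      hs (mem_insert_self p s) (mem_insert_of_mem hq) (ne_of_mem_of_not_mem hq hp).symm
    exact (card_resSet_mul_le A hcop).trans
      (Nat.mul_le_mul_left _ (ih (hs.mono (by simp))))

theorem one_add_inv_two_mul_pow_le_two (k : ℕ) : (1 + ((2 * k : ℕ) : ℝ)⁻¹) ^ k ≤ 2 := by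
  refine (pow_le_pow_iff_left₀ (by positivity) zero_le_two two_ne_zero).1 ?_
  rw [← pow_mul, mul_comm]
  calc _ ≤ Real.exp 1 := Real.one_add_inv_pow_le_exp
    _ ≤ 2 ^ 2 := by linarith [Real.exp_one_lt_d9]

theorem card_resSet_prod_le_two_mul_div {A : Finset ℤ} {C : ℝ} {s : Finset ℕ}
    (hs : ∀ p ∈ s, p.Prime) (hlarge : ∀ p ∈ s, 4 * C * #s ≤ p)
    (hres : ∀ p ∈ s, (#(resSet A p) : ℝ) ≤ p / 2 + C) :
    (#(resSet A (∏ p ∈ s, p)) : ℝ) ≤ 2 * (∏ p ∈ s, p) / 2 ^ #s := by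
  have hcop : (s : Set ℕ).Pairwise Nat.Coprime := fun p hp q hq hpq =>
    (Nat.coprime_primes (hs p hp) (hs q hq)).2 hpq
  have hterm (p : ℕ) (hp : p ∈ s) :
      (#(resSet A p) : ℝ) ≤ p / 2 * (1 + ((2 * #s : ℕ) : ℝ)⁻¹) := by
    have hk : (0 : ℝ) < #s := by exact_mod_cast card_pos.2 ⟨p, hp⟩
    have hC : C ≤ p / (4 * #s) := by rw [le_div_iff₀ (by positivity)]; linarith [hlarge p hp]
    calc _ ≤ (p : ℝ) / 2 + C := hres p hp
      _ ≤ (p : ℝ) / 2 + p / (4 * #s) := by linarith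
      _ = _ := by field_simp; push_cast; ring
  calc (#(resSet A (∏ p ∈ s, p)) : ℝ) ≤ ∏ p ∈ s, (#(resSet A p) : ℝ) := by
        exact_mod_cast card_resSet_prod_le A hcop
    _ ≤ ∏ p ∈ s, ((p : ℝ) / 2 * (1 + ((2 * #s : ℕ) : ℝ)⁻¹)) :=
        prod_le_prod (fun _ _ => by positivity) hterm
    _ = (∏ p ∈ s, (p : ℝ)) / 2 ^ #s * (1 + ((2 * #s : ℕ) : ℝ)⁻¹) ^ #s := by
        rw [prod_mul_distrib, prod_div_distrib, prod_const, prod_const]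
    _ ≤ (∏ p ∈ s, (p : ℝ)) / 2 ^ #s * 2 := by
        gcongr; exact one_add_inv_two_mul_pow_le_two _
    _ = 2 * (∏ p ∈ s, p) / 2 ^ #s := by push_cast; ring

theorem exists_primes_card_eq (M k : ℕ) (hM : M ≠ 0) :
    ∃ s : Finset ℕ, #s = k ∧ ∀ p ∈ s, p.Prime ∧ M < p ∧ p ≤ 2 ^ k * M := by
  induction k with
  | zero => exact ⟨∅, rfl, by simp⟩
  | succ k ih =>
    obtain ⟨s, hcard, hs⟩ := ih
    obtain ⟨q, hq, hlt, hle⟩ := Nat.exists_prime_lt_and_le_two_mul (2 ^ k * M) (by positivity)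
    have hqs : q ∉ s := fun h => (hs q h).2.2.not_gt hlt
    refine ⟨insert q s, by rw [card_insert_of_notMem hqs, hcard], ?_⟩
    simp only [mem_insert, forall_eq_or_imp]
    refine ⟨⟨hq, lt_of_le_of_lt (Nat.le_mul_of_pos_left M (by positivity)) hlt, by
      rw [pow_succ]; linarith⟩, fun p hp => ⟨(hs p hp).1, (hs p hp).2.1, ?_⟩⟩
    calc p ≤ 2 ^ k * M := (hs p hp).2.2
      _ ≤ 2 ^ (k + 1) * M := by gcongr <;> omega

theorem eventually_mul_sq_lt_two_pow (a : ℕ) :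
    ∀ᶠ j : ℕ in Filter.atTop, a * (j + 1) ^ 2 < 2 ^ j := by
  have h := (tendsto_pow_const_div_const_pow_of_one_lt 3 one_lt_two).comp
    (Filter.tendsto_add_atTop_nat 1)
  filter_upwards [h.eventually (gt_mem_nhds one_half_pos), Filter.eventually_ge_atTop a]
    with j hj hja
  have hcube : ((j + 1 : ℕ) : ℝ) ^ 3 < 2 ^ j := by
    simp only [Function.comp_apply] at hj
    rw [div_lt_iff₀ (by positivity), pow_succ (2 : ℝ) j] at hj
    linarith
  calc a * (j + 1) ^ 2 < (j + 1) * (j + 1) ^ 2 := by gcongr; omega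
    _ = (j + 1) ^ 3 := by ring
    _ < 2 ^ j := by exact_mod_cast hcube

theorem exists_sieve_level (c : ℕ) : ∃ N₀ : ℕ, ∀ N, N₀ ≤ N →
    ∃ k : ℕ, (Nat.log 2 N + 1) ^ 2 ≤ 2 ^ k ∧ (2 ^ k * (c * k + 1)) ^ (2 * k) ≤ N := by
  obtain ⟨j₀, hj₀⟩ := Filter.eventually_atTop.1 (eventually_mul_sq_lt_two_pow (8 * (c + 1)))
  refine ⟨2 ^ 2 ^ j₀, fun N hN => ?_⟩
  set L := Nat.log 2 N
  set j := Nat.log 2 (L + 1)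
  have hN0 : N ≠ 0 := (Nat.lt_of_lt_of_le (by positivity) hN).ne'
  have hL : 2 ^ j₀ ≤ L := Nat.le_log_of_pow_le one_lt_two hN
  have hjL : 2 ^ j ≤ L + 1 := Nat.pow_log_le_self 2 (by omega)
  have hj : j₀ ≤ j := Nat.le_log_of_pow_le one_lt_two (by omega)
  refine ⟨2 * (j + 1), ?_, ?_⟩
  · rw [pow_mul']
    exact Nat.pow_le_pow_left (Nat.lt_pow_succ_log_self one_lt_two _).le 2
  · calc (2 ^ (2 * (j + 1)) * (c * (2 * (j + 1)) + 1)) ^ (2 * (2 * (j + 1)))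
        ≤ (2 ^ (2 * (j + 1)) * 2 ^ (c * (2 * (j + 1)))) ^ (2 * (2 * (j + 1))) := by
          gcongr; exact Nat.lt_two_pow_self
      _ = 2 ^ (8 * (c + 1) * (j + 1) ^ 2) := by rw [← pow_add, ← pow_mul]; ring
      _ ≤ 2 ^ L := Nat.pow_le_pow_right two_pos (by have := hj₀ j hj; omega)
      _ ≤ N := Nat.pow_log_le_self 2 hN0

theorem log_le_natLog_two_add_one (N : ℕ) : Real.log N ≤ Nat.log 2 N + 1 := by
  rcases N.eq_zero_or_pos with rfl | hN
  · simp
  have h : (N : ℝ) < 2 ^ (Nat.log 2 N + 1) := by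
    exact_mod_cast Nat.lt_pow_succ_log_self one_lt_two N
  calc Real.log N ≤ Real.log (2 ^ (Nat.log 2 N + 1)) := Real.log_le_log (by positivity) h.le
    _ = (Nat.log 2 N + 1) * Real.log 2 := by rw [Real.log_pow]; push_cast; ring
    _ ≤ Nat.log 2 N + 1 := by
      have := Real.log_two_lt_d9
      nlinarith

theorem sidon_sieve_upper_bound_general (C : ℝ) :
    ∃ c : ℝ, 0 < c ∧ ∃ N₀ : ℕ, ∀ N : ℕ, N₀ ≤ N →
      ∀ (A : Finset ℤ) (ε : ℕ → ℝ),
        A ⊆ Finset.Icc 1 (N : ℤ) →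
        (∀ n : ℤ, n ≠ 0 → rMinus A n ≤ 1) →
        (∀ p : ℕ, p.Prime → 0 ≤ ε p ∧ ε p ≤ C) →
        (∀ p : ℕ, p.Prime → ((resSet A p).card : ℝ) ≤ (p : ℝ) / 2 + ε p) →
        (A.card : ℝ) ≤ c * Real.sqrt N / Real.log N := by
  obtain ⟨N₀, hN₀⟩ := exists_sieve_level (4 * ⌈C⌉₊)
  refine ⟨4, four_pos, max N₀ 2, fun N hN A ε hA hS hε hres => ?_⟩
  obtain ⟨k, hlog, hlevel⟩ := hN₀ N (le_of_max_le_left hN)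
  obtain ⟨s, rfl, hs⟩ := exists_primes_card_eq (4 * ⌈C⌉₊ * k + 1) k (by omega)
  have hlarge (p : ℕ) (hp : p ∈ s) : 4 * C * #s ≤ p := by
    have : (4 * ⌈C⌉₊ * #s + 1 : ℝ) < p := by exact_mod_cast (hs p hp).2.1
    have : 4 * C * #s ≤ 4 * ⌈C⌉₊ * #s := by gcongr; exact Nat.le_ceil C
    linarith
  have hsieve := card_resSet_prod_le_two_mul_div (fun p hp => (hs p hp).1) hlarge
    (fun p hp => (hres p (hs p hp).1).trans (by linarith [(hε p (hs p hp).1).2]))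
  have hprod : (∏ p ∈ s, p) ^ 2 ≤ N := by
    refine le_trans ?_ hlevel
    rw [pow_mul']
    exact Nat.pow_le_pow_left (prod_le_pow_card _ _ _ fun p hp => (hs p hp).2.2) 2
  have hlogN : 0 < Real.log N := Real.log_pos (by exact_mod_cast (le_of_max_le_right hN))
  calc (#A : ℝ) ≤ 4 * √N / √(2 ^ #s) := IsSidon.card_le_of_card_resSet_le hS hA
        (prod_pos fun p hp => (hs p hp).1.pos) hprod (one_le_pow₀ one_le_two) hsieve
    _ ≤ 4 * √N / Real.log N := by
        gcongr
        rw [Real.le_sqrt hlogN.le (by positivity)]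
        calc Real.log N ^ 2 ≤ ((Nat.log 2 N + 1 : ℕ) : ℝ) ^ 2 := by
              gcongr; exact_mod_cast log_le_natLog_two_add_one N
          _ ≤ 2 ^ #s := by exact_mod_cast hlog

theorem sidon_sieve_upper_bound (C : ℝ) (hC : 0 ≤ C) :
    ∃ c : ℝ, 0 < c ∧ ∃ N₀ : ℕ, ∀ N : ℕ, N₀ ≤ N →
      ∀ (A : Finset ℤ) (ε : ℕ → ℝ),
        A ⊆ Finset.Icc 1 (N : ℤ) →
        (∀ n : ℤ, n ≠ 0 → rMinus A n ≤ 1) →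
        (∀ p : ℕ, p.Prime → 0 ≤ ε p ∧ ε p ≤ C) →
        (∀ p : ℕ, p.Prime → ((resSet A p).card : ℝ) ≤ (p : ℝ) / 2 + ε p) →
        (A.card : ℝ) ≤ c * Real.sqrt N / Real.log N :=
  sidon_sieve_upper_bound_general C
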